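/- Let n ∈ ℕ, n ≥ 1, and set ñ = 4n−3. Let F be the ñ×ñ unitary DFT matrix and 𝒮_z : ℂ^n → ℂ^{ñ} the zero-padded symmetrization. Then there exists a constant c > 0 (depending only on ñ) such that for all x₁, x₂ ∈ ℂ^n with (x₁)_0, (x₂)_0 ∈ ℝ, it holds that ‖ |F 𝒮_z(x₁)|² − |F 𝒮_z(x₂)|² ‖ ≥ c · ‖x₁ − x₂‖ · ‖x₁ + x₂‖. -/

import Mathlib

open scoped BigOperators

/-- Circular convolution on `ℂ^m`: `(u ⊛ v)_k = ∑_l u_l v_{(k-l) mod m}`. -/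
noncomputable def cconv {m : ℕ} (u v : Fin m → ℂ) : Fin m → ℂ :=
  fun k => ∑ l : Fin m, u l * v (k - l)

/-- Circular correlation on `ℂ^m`: `(u ⋆ v)_k = ∑_l u_l conj (v_{(k+l) mod m})`. -/
noncomputable def ccorr {m : ℕ} (u v : Fin m → ℂ) : Fin m → ℂ :=
  fun k => ∑ l : Fin m, u l * (starRingEnd ℂ) (v (k + l))

/-- Euclidean (ℓ²) norm of a vector. -/
noncomputable def euclNorm {m : ℕ} {E : Type*} [SeminormedAddGroup E] (x : Fin m → E) : ℝ :=
  Real.sqrt (∑ i, ‖x i‖ ^ 2)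

/-- Zero padding `ℂ^n → ℂ^m` (entries of `x` followed by zeros). -/
def pad (n m : ℕ) (x : Fin n → ℂ) : Fin m → ℂ :=
  fun k => if h : (k : ℕ) < n then x ⟨k, h⟩ else 0

/-- `x` has at most `s` nonzero entries. -/
def sparse {n : ℕ} (s : ℕ) (x : Fin n → ℂ) : Prop :=
  Set.ncard {i | x i ≠ 0} ≤ s

/-- The unitary DFT matrix `F_{kl} = m^{-1/2} exp(2πi kl/m)`. -/
noncomputable def dft (m : ℕ) : Matrix (Fin m) (Fin m) ℂ :=
  fun k l => ((Real.sqrt m : ℝ) : ℂ)⁻¹ *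
    Complex.exp (2 * (Real.pi : ℂ) * Complex.I * ((k : ℕ) : ℂ) * ((l : ℕ) : ℂ) / (m : ℂ))

/-- Cyclic shift: `(S x)_k = x_{(k-1) mod m}`. -/
def shiftOp {m : ℕ} (x : Fin m → ℂ) : Fin m → ℂ :=
  fun k => x ⟨((k : ℕ) + (m - 1)) % m, Nat.mod_lt _ (by have := k.isLt; omega)⟩

/-- Time reversal: `(Γ x)_k = x_{(-k) mod m}`. -/
def rev {m : ℕ} (u : Fin m → ℂ) : Fin m → ℂ := fun k => u (-k)

/-- Symmetrization `𝒮 : ℂ^n → ℂ^{2n-1}`,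
`𝒮(x) = (x_0, …, x_{n-1}, conj x_{n-1}, …, conj x_1)`. -/
noncomputable def symmetrize (n : ℕ) (x : Fin n → ℂ) : Fin (2 * n - 1) → ℂ :=
  fun k =>
    if h : (k : ℕ) < n then x ⟨k, h⟩
    else (starRingEnd ℂ) (x ⟨2 * n - 1 - (k : ℕ), by have := k.isLt; omega⟩)

/-- Zero-padded symmetrization `𝒮_z : ℂ^n → ℂ^{4n-3}`, `𝒮_z(x) = 𝒮((x, 0_{n-1}))`. -/
noncomputable def symmetrizeZ (n : ℕ) (x : Fin n → ℂ) : Fin (4 * n - 3) → ℂ :=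
  fun k => symmetrize (2 * n - 1) (pad n (2 * n - 1) x) ⟨(k : ℕ), by have := k.isLt; omega⟩

/-- `𝒮_z' : ℂ^n → ℂ^{4n-1}`,
`𝒮_z'(x) = (0_n, x_0, …, x_{n-1}, conj x_{n-1}, …, conj x_0, 0_{n-1})`. -/
noncomputable def symmetrizeZ' (n : ℕ) (x : Fin n → ℂ) : Fin (4 * n - 1) → ℂ :=
  fun k =>
    if _ : (k : ℕ) < n then 0
    else if h2 : (k : ℕ) < 2 * n then x ⟨(k : ℕ) - n, by omega⟩
    else if h3 : (k : ℕ) < 3 * n then (starRingEnd ℂ) (x ⟨3 * n - 1 - (k : ℕ), by omega⟩)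
    else 0

/-!
For `x` with real zeroth entry, `𝒮_z(x)` is conjugate-symmetric, so its DFT `p(x)` is real and
`|p(x₁)|² - |p(x₂)|² = p(x₁ - x₂) ⊙ p(x₁ + x₂)` (entrywise product). The real-bilinear map
`(d, s) ↦ p(d) ⊙ p(s)` has no nontrivial zeros: `𝒮_z(d)` is supported on a cyclic window of length
`2n - 1`, so up to a phase `p(d)` lists the values of a polynomial of degree `≤ 2n - 2` at the
`(4n - 3)`-th roots of unity, and a product of two such polynomials vanishing at all `4n - 3` of them
is zero. A continuous bilinear map on finite-dimensional spaces without nontrivial zeros satisfies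
`‖B d s‖ ≥ c ‖d‖ ‖s‖`, by compactness of the unit spheres.
-/

open Complex Polynomial Matrix ComplexConjugate Real

theorem ContinuousLinearMap.exists_pos_mul_norm_mul_norm_le {E F G : Type*}
    [NormedAddCommGroup E] [NormedSpace ℝ E] [FiniteDimensional ℝ E]
    [NormedAddCommGroup F] [NormedSpace ℝ F] [FiniteDimensional ℝ F]
    [NormedAddCommGroup G] [NormedSpace ℝ G]
    (B : E →L[ℝ] F →L[ℝ] G) (hB : ∀ x y, B x y = 0 → x = 0 ∨ y = 0) :
    ∃ c > 0, ∀ x y, c * ‖x‖ * ‖y‖ ≤ ‖B x y‖ := by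
  have hsphere : ∀ p ∈ Metric.sphere (0 : E) 1 ×ˢ Metric.sphere (0 : F) 1, 0 < ‖B p.1 p.2‖ := by
    rintro ⟨x, y⟩ ⟨hx, hy⟩
    refine norm_pos_iff.2 fun h => ?_
    rcases hB x y h with rfl | rfl <;> simp_all
  obtain ⟨c, hc, hcB⟩ :=
    ((isCompact_sphere (0 : E) 1).prod (isCompact_sphere (0 : F) 1)).exists_forall_le'
      (continuous_norm.comp B.continuous₂).continuousOn hsphere
  refine ⟨c, hc, fun x y => ?_⟩
  rcases eq_or_ne x 0 with rfl | hx
  · simp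
  rcases eq_or_ne y 0 with rfl | hy
  · simp
  have hxy := hcB (‖x‖⁻¹ • x, ‖y‖⁻¹ • y) ⟨by simp [norm_smul, hx], by simp [norm_smul, hy]⟩
  simp only [Function.comp_apply, Function.uncurry_apply_pair, map_smul, _root_.smul_apply,
    norm_smul, norm_inv, norm_norm] at hxy
  calc c * ‖x‖ * ‖y‖ ≤ ‖y‖⁻¹ * (‖x‖⁻¹ * ‖B x y‖) * ‖x‖ * ‖y‖ := by gcongr
    _ = ‖B x y‖ := by field_simp

lemma euclNorm_eq_norm_toLp {m : ℕ} {E : Type*} [SeminormedAddCommGroup E] (x : Fin m → E) :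
    euclNorm x = ‖WithLp.toLp 2 x‖ :=
  (PiLp.norm_eq_of_L2 _).symm

lemma norm_le_euclNorm {m : ℕ} {E : Type*} [SeminormedAddCommGroup E] (x : Fin m → E) :
    ‖x‖ ≤ euclNorm x := by
  rw [euclNorm_eq_norm_toLp]
  exact (pi_norm_le_iff_of_nonneg (norm_nonneg _)).2 (PiLp.norm_apply_le (WithLp.toLp 2 x))

lemma ofReal_norm_sq_sub_norm_sq {a b : ℂ} (ha : a.im = 0) (hb : b.im = 0) :
    ((‖a‖ ^ 2 - ‖b‖ ^ 2 : ℝ) : ℂ) = (a - b) * (a + b) := by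
  conv_rhs => rw [← re_add_im a, ← re_add_im b, ha, hb]
  simp only [Complex.sq_norm, normSq_apply, ha, hb]
  push_cast
  ring

noncomputable def dftRoot (m : ℕ) : ℂ := exp (2 * π * I / m)

lemma isPrimitiveRoot_dftRoot {m : ℕ} (hm : m ≠ 0) : IsPrimitiveRoot (dftRoot m) m :=
  isPrimitiveRoot_exp m hm

lemma dft_apply (m : ℕ) (k l : Fin m) :
    dft m k l = ((√m : ℝ) : ℂ)⁻¹ * dftRoot m ^ ((k : ℕ) * l) := by
  rw [dft, dftRoot, ← Complex.exp_nat_mul]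
  congr 2
  push_cast
  ring

lemma dft_mulVec_apply {m : ℕ} (u : Fin m → ℂ) (k : Fin m) :
    (dft m *ᵥ u) k = ((√m : ℝ) : ℂ)⁻¹ * ∑ l, u l * dftRoot m ^ ((k : ℕ) * l) := by
  simp only [Matrix.mulVec, dotProduct, dft_apply, Finset.mul_sum]
  exact Finset.sum_congr rfl fun l _ => by ring

lemma conj_dftRoot_pow {m a b : ℕ} (hm : m ≠ 0) (hab : m ∣ a + b) :
    conj (dftRoot m ^ a) = dftRoot m ^ b := by
  have hζ := isPrimitiveRoot_dftRoot hm
  rw [← inv_eq_conj (by rw [norm_pow, hζ.norm'_eq_one hm, one_pow])]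
  exact inv_eq_of_mul_eq_one_right (by rwa [← pow_add, hζ.pow_eq_one_iff_dvd])

theorem conj_dft_mulVec_of_conj_symm {m : ℕ} {u : Fin m → ℂ}
    (hu : ∀ l, u (-l) = conj (u l)) (k : Fin m) :
    conj ((dft m *ᵥ u) k) = (dft m *ᵥ u) k := by
  have hm : m ≠ 0 := k.pos.ne'
  rw [dft_mulVec_apply, map_mul, map_inv₀, conj_ofReal, map_sum]
  congr 1
  refine Fintype.sum_equiv (Equiv.neg _) _ _ fun l => ?_
  rw [map_mul, Equiv.neg_apply, hu, conj_dftRoot_pow hm]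
  rw [← mul_add]
  refine dvd_mul_of_dvd_right (Nat.dvd_of_mod_eq_zero ?_) _
  have : NeZero m := ⟨hm⟩
  rw [← Fin.val_add, add_neg_cancel, Fin.val_zero]

noncomputable def windowPoly {m : ℕ} (u : Fin m → ℂ) (s : Fin m) : ℂ[X] :=
  ∑ j : Fin m, C (u (j + s)) * X ^ (j : ℕ)

section windowPoly

variable {m : ℕ} (u : Fin m → ℂ) (s : Fin m)

lemma coeff_windowPoly (j : Fin m) : (windowPoly u s).coeff j = u (j + s) := by
  rw [windowPoly, finsetSum_coeff, Finset.sum_eq_single j (fun i _ hij => ?_) (by simp)]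
  · simp
  · rw [coeff_C_mul_X_pow, if_neg (Fin.val_injective.ne hij).symm]

lemma windowPoly_eq_zero_iff : windowPoly u s = 0 ↔ u = 0 := by
  refine ⟨fun h => funext fun l => ?_, fun h => by simp [windowPoly, h]⟩
  have : NeZero m := ⟨l.pos.ne'⟩
  have hl := coeff_windowPoly u s (l - s)
  rwa [h, coeff_zero, sub_add_cancel, eq_comm] at hl

lemma natDegree_windowPoly_le {d : ℕ} (hu : ∀ j : Fin m, d < (j : ℕ) → u (j + s) = 0) :
    (windowPoly u s).natDegree ≤ d := by
  refine natDegree_sum_le_of_forall_le _ _ fun j _ => ?_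
  rcases le_or_gt (j : ℕ) d with hj | hj
  · exact (natDegree_C_mul_X_pow_le _ _).trans hj
  · simp [hu j hj]

lemma dft_mulVec_apply_eq_eval_windowPoly (k : Fin m) :
    (dft m *ᵥ u) k = ((√m : ℝ) : ℂ)⁻¹ * dftRoot m ^ ((k : ℕ) * s) *
      (windowPoly u s).eval (dftRoot m ^ (k : ℕ)) := by
  have hm : m ≠ 0 := k.pos.ne'
  have : NeZero m := ⟨hm⟩
  rw [dft_mulVec_apply, mul_assoc]
  congr 1
  rw [windowPoly, eval_finsetSum, Finset.mul_sum]
  refine (Fintype.sum_equiv (Equiv.addRight s) _ _ fun j => ?_).symm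
  rw [eval_mul, eval_C, eval_pow, eval_X, Equiv.coe_addRight, mul_left_comm, ← pow_mul,
    ← pow_add]
  congr 1
  refine pow_eq_pow_of_modEq ?_ (isPrimitiveRoot_dftRoot hm).pow_eq_one
  rw [Fin.val_add, ← mul_add, add_comm (s : ℕ)]
  exact ((Nat.mod_modEq _ _).mul_left _).symm

end windowPoly

theorem eq_zero_or_eq_zero_of_dft_mulVec_mul_eq_zero {m d e : ℕ} (hde : d + e < m)
    {u v : Fin m → ℂ} {s t : Fin m}
    (hu : ∀ j : Fin m, d < (j : ℕ) → u (j + s) = 0)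
    (hv : ∀ j : Fin m, e < (j : ℕ) → v (j + t) = 0)
    (huv : ∀ k, (dft m *ᵥ u) k * (dft m *ᵥ v) k = 0) : u = 0 ∨ v = 0 := by
  have hm : m ≠ 0 := by omega
  have hζ := isPrimitiveRoot_dftRoot hm
  have hprod : windowPoly u s * windowPoly v t = 0 := by
    refine eq_zero_of_natDegree_lt_card_of_eval_eq_zero _
      (f := fun k : Fin m => dftRoot m ^ (k : ℕ))
      (fun i j hij => Fin.ext (hζ.pow_inj i.isLt j.isLt hij)) (fun k => ?_) ?_
    · have := huv k
      rw [dft_mulVec_apply_eq_eval_windowPoly u s, dft_mulVec_apply_eq_eval_windowPoly v t] at this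
      simpa [hm, hζ.ne_zero hm] using this
    · rw [Fintype.card_fin]
      have := natDegree_windowPoly_le u s hu
      have := natDegree_windowPoly_le v t hv
      exact natDegree_mul_le.trans_lt (by omega)
  simpa only [mul_eq_zero, windowPoly_eq_zero_iff] using hprod

section symmetrizeZ

variable {n : ℕ} (x : Fin n → ℂ)

lemma symmetrizeZ_apply_of_lt {k : Fin (4 * n - 3)} (hk : (k : ℕ) < n) :
    symmetrizeZ n x k = x ⟨k, hk⟩ := by
  simp only [symmetrizeZ, symmetrize, pad, dif_pos hk,
    dif_pos (show (k : ℕ) < 2 * n - 1 by omega)]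

lemma symmetrizeZ_apply_eq_zero {k : Fin (4 * n - 3)} (hk₁ : n ≤ (k : ℕ))
    (hk₂ : (k : ℕ) + n ≤ 4 * n - 3) : symmetrizeZ n x k = 0 := by
  simp only [symmetrizeZ, symmetrize, pad]
  split_ifs <;> first | omega | simp

lemma symmetrizeZ_apply_of_lt_add {k : Fin (4 * n - 3)} (hk : 4 * n - 3 < (k : ℕ) + n) :
    symmetrizeZ n x k = conj (x ⟨4 * n - 3 - k, by omega⟩) := by
  simp only [symmetrizeZ, symmetrize, pad]
  rw [dif_neg (by omega), dif_pos (by omega)]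
  congr 2
  ext
  simp only
  omega

lemma symmetrizeZ_neg (hn : 0 < n) (hx : (x ⟨0, hn⟩).im = 0) (l : Fin (4 * n - 3)) :
    symmetrizeZ n x (-l) = conj (symmetrizeZ n x l) := by
  have : NeZero (4 * n - 3) := ⟨by omega⟩
  have hl := l.isLt
  rcases eq_or_ne l 0 with rfl | hl0
  · rw [neg_zero, symmetrizeZ_apply_of_lt x (by simpa using hn), eq_comm]
    exact conj_eq_iff_im.2 hx
  have hneg : ((-l : Fin (4 * n - 3)) : ℕ) = 4 * n - 3 - l := by rw [Fin.val_neg, if_neg hl0]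
  have hl0' : (l : ℕ) ≠ 0 := Fin.val_ne_of_ne hl0
  rcases lt_or_ge (l : ℕ) n with h | h
  · rw [symmetrizeZ_apply_of_lt x h, symmetrizeZ_apply_of_lt_add x (by omega)]
    congr 2
    ext
    simp only [hneg]
    omega
  rcases le_or_gt ((l : ℕ) + n) (4 * n - 3) with h' | h'
  · rw [symmetrizeZ_apply_eq_zero x h h', symmetrizeZ_apply_eq_zero x (by omega) (by omega),
      map_zero]
  · rw [symmetrizeZ_apply_of_lt x (by omega), symmetrizeZ_apply_of_lt_add x h', conj_conj]
    congr 1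
    ext
    simp only [hneg]

lemma eq_zero_of_symmetrizeZ_eq_zero (h : symmetrizeZ n x = 0) : x = 0 := by
  funext i
  have hi : (i : ℕ) < 4 * n - 3 := by omega
  simpa [symmetrizeZ_apply_of_lt x (k := ⟨i, hi⟩) i.isLt] using congrFun h ⟨i, hi⟩

noncomputable def symmetrizeZₗ (n : ℕ) : (Fin n → ℂ) →ₗ[ℝ] (Fin (4 * n - 3) → ℂ) where
  toFun := symmetrizeZ n
  map_add' x y := by
    funext k
    simp only [symmetrizeZ, symmetrize, pad, Pi.add_apply]
    split_ifs <;> simp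
  map_smul' c x := by
    funext k
    simp only [symmetrizeZ, symmetrize, pad, Pi.smul_apply, RingHom.id_apply]
    split_ifs <;> simp [real_smul]

end symmetrizeZ

section fourierSymmetrizeZ

variable {n : ℕ}

-- The domain is `EuclideanSpace` so that its norm is `euclNorm`.
noncomputable def fourierSymmetrizeZ (n : ℕ) :
    EuclideanSpace ℂ (Fin n) →L[ℝ] (Fin (4 * n - 3) → ℂ) :=
  LinearMap.toContinuousLinearMap <|
    ((dft (4 * n - 3)).mulVecLin.restrictScalars ℝ) ∘ₗ symmetrizeZₗ n ∘ₗ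
      (WithLp.linearEquiv 2 ℝ (Fin n → ℂ)).toLinearMap

lemma im_dft_mulVec_symmetrizeZ (hn : 0 < n) {x : Fin n → ℂ} (hx : (x ⟨0, hn⟩).im = 0)
    (k : Fin (4 * n - 3)) : ((dft (4 * n - 3) *ᵥ symmetrizeZ n x) k).im = 0 :=
  conj_eq_iff_im.1 (conj_dft_mulVec_of_conj_symm (symmetrizeZ_neg x hn hx) k)

theorem eq_zero_or_eq_zero_of_fourierSymmetrizeZ_mul_eq_zero (hn : 0 < n)
    (x y : EuclideanSpace ℂ (Fin n)) (h : fourierSymmetrizeZ n x * fourierSymmetrizeZ n y = 0) :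
    x = 0 ∨ y = 0 := by
  have : NeZero (4 * n - 3) := ⟨by omega⟩
  -- `𝒮_z(z)` vanishes outside the cyclic window `-(n - 1), …, n - 1`.
  let c : Fin (4 * n - 3) := ⟨n - 1, by omega⟩
  have hwindow : ∀ (z : Fin n → ℂ) (j : Fin (4 * n - 3)), 2 * n - 2 < (j : ℕ) →
      symmetrizeZ n z (j + -c) = 0 := by
    intro z j hj
    have hjc : ((j + -c : Fin (4 * n - 3)) : ℕ) = j - (n - 1) := by
      rw [← sub_eq_add_neg, Fin.coe_sub_iff_le.2 (by simp [c, Fin.le_def]; omega)]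
    have := j.isLt
    exact symmetrizeZ_apply_eq_zero z (by omega) (by omega)
  have := eq_zero_or_eq_zero_of_dft_mulVec_mul_eq_zero (by omega) (hwindow x.ofLp)
    (hwindow y.ofLp) (congrFun h)
  exact this.imp (fun h => by simpa using eq_zero_of_symmetrizeZ_eq_zero _ h)
    (fun h => by simpa using eq_zero_of_symmetrizeZ_eq_zero _ h)

lemma ofReal_norm_sq_sub_norm_sq_dft_mulVec_symmetrizeZ (hn : 0 < n) {x₁ x₂ : Fin n → ℂ}
    (h₁ : (x₁ ⟨0, hn⟩).im = 0) (h₂ : (x₂ ⟨0, hn⟩).im = 0) (k : Fin (4 * n - 3)) :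
    ((‖(dft (4 * n - 3) *ᵥ symmetrizeZ n x₁) k‖ ^ 2 -
        ‖(dft (4 * n - 3) *ᵥ symmetrizeZ n x₂) k‖ ^ 2 : ℝ) : ℂ) =
      (fourierSymmetrizeZ n (WithLp.toLp 2 (x₁ - x₂)) *
        fourierSymmetrizeZ n (WithLp.toLp 2 (x₁ + x₂))) k := by
  rw [ofReal_norm_sq_sub_norm_sq (im_dft_mulVec_symmetrizeZ hn h₁ k)
    (im_dft_mulVec_symmetrizeZ hn h₂ k), WithLp.toLp_sub, WithLp.toLp_add, map_sub, map_add]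
  rfl

end fourierSymmetrizeZ

/-- Stability of the magnitude Fourier measurements of zero-padded symmetrized
vectors, in terms of `‖x₁ ∓ x₂‖`. -/
theorem stable_recovery_symmetrizeZ' (n : ℕ) (hn : 0 < n) :
    ∃ c : ℝ, 0 < c ∧ ∀ x₁ x₂ : Fin n → ℂ,
      (x₁ ⟨0, hn⟩).im = 0 → (x₂ ⟨0, hn⟩).im = 0 →
      c * euclNorm (x₁ - x₂) * euclNorm (x₁ + x₂) ≤
        euclNorm (fun k => ‖(dft (4 * n - 3)).mulVec (symmetrizeZ n x₁) k‖ ^ 2 -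
          ‖(dft (4 * n - 3)).mulVec (symmetrizeZ n x₂) k‖ ^ 2) := by
  obtain ⟨c, hc, hB⟩ := ((ContinuousLinearMap.mul ℝ (Fin (4 * n - 3) → ℂ)).bilinearComp
    (fourierSymmetrizeZ n) (fourierSymmetrizeZ n)).exists_pos_mul_norm_mul_norm_le
    (eq_zero_or_eq_zero_of_fourierSymmetrizeZ_mul_eq_zero hn)
  refine ⟨c, hc, fun x₁ x₂ h₁ h₂ => ?_⟩
  calc c * euclNorm (x₁ - x₂) * euclNorm (x₁ + x₂)
      ≤ ‖fourierSymmetrizeZ n (WithLp.toLp 2 (x₁ - x₂)) *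
          fourierSymmetrizeZ n (WithLp.toLp 2 (x₁ + x₂))‖ := by
        simpa only [euclNorm_eq_norm_toLp, ContinuousLinearMap.bilinearComp_apply,
          ContinuousLinearMap.mul_apply'] using hB _ _
    _ ≤ euclNorm (fourierSymmetrizeZ n (WithLp.toLp 2 (x₁ - x₂)) *
          fourierSymmetrizeZ n (WithLp.toLp 2 (x₁ + x₂))) := norm_le_euclNorm _
    _ = _ := by
        simp only [euclNorm, ← ofReal_norm_sq_sub_norm_sq_dft_mulVec_symmetrizeZ hn h₁ h₂,
          norm_real]
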